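/- arXiv:2312.05517 — 4 statements merged into one kernel-verified Lean document; each statement's English description precedes it below -/
import Mathlib

section
/- Let (π_n) and (x_n) be sequences with x_n ∈ argmax_{x∈S} (f(x) − π_n·g(x)) and π_{n+1} = f(x_n)/g(x_n) for every n. Then for every n: (i) π_{n+1} ≤ π*; (ii) if π_n ≤ π* then π_{n+1} ≥ π_n; and (iii) if π_n < π* then π_{n+1} > π_n. -/
/-- Monotonicity of the Dinkelbach iterates: if
`x_n ∈ argmax_{x∈S} (f(x) - π_n·g(x))` and `π_{n+1} = f(x_n)/g(x_n)`, then
(i) `π_{n+1} ≤ π*`; (ii) `π_n ≤ π*` implies `π_{n+1} ≥ π_n`; and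
(iii) `π_n < π*` implies `π_{n+1} > π_n`. -/
theorem dinkelbach_iterates_monotone
    {K : ℕ} (S : Set (Fin K → ℝ)) (hS : IsCompact S) (hne : S.Nonempty)
    (f g : (Fin K → ℝ) → ℝ)
    (hf : ContinuousOn f S) (hg : ContinuousOn g S)
    (hgpos : ∀ x ∈ S, 0 < g x)
    (πstar : ℝ) (hπstar : IsGreatest ((fun x => f x / g x) '' S) πstar)
    (πs : ℕ → ℝ) (xs : ℕ → (Fin K → ℝ))
    (hxsmem : ∀ n, xs n ∈ S)
    (hxsmax : ∀ n, IsMaxOn (fun x => f x - πs n * g x) S (xs n))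
    (hupdate : ∀ n, πs (n + 1) = f (xs n) / g (xs n)) :
    ∀ n : ℕ,
      πs (n + 1) ≤ πstar ∧
      (πs n ≤ πstar → πs n ≤ πs (n + 1)) ∧
      (πs n < πstar → πs n < πs (n + 1)) := by
  intro n
  obtain ⟨xopt, hxopt, hxval⟩ := hπstar.1
  have hgn := hgpos (xs n) (hxsmem n)
  have hgo := hgpos xopt hxopt
  have key : πstar - πs n ≤ (f (xs n) - πs n * g (xs n)) / g xopt := by
    have hmax := hxsmax n hxopt
    simp only [Set.mem_setOf_eq] at hmax
    have h1 : f xopt - πs n * g xopt ≤ f (xs n) - πs n * g (xs n) := hmax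
    have h2 : (πstar - πs n) * g xopt = f xopt - πs n * g xopt := by
      have : f xopt = πstar * g xopt := by
        field_simp at hxval; linarith [hxval]
      ring_nf
      nlinarith [this]
    rw [le_div_iff₀ hgo]
    nlinarith
  refine ⟨?_, ?_, ?_⟩
  · rw [hupdate n]
    exact hπstar.2 ⟨xs n, hxsmem n, rfl⟩
  · intro h
    have h1 := key
    have h2 : 0 ≤ f (xs n) - πs n * g (xs n) := by
      have hd : 0 ≤ (f (xs n) - πs n * g (xs n)) / g xopt := le_trans (by linarith) h1
      nlinarith [div_mul_cancel₀ (f (xs n) - πs n * g (xs n)) hgo.ne']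
    rw [hupdate n, le_div_iff₀ hgn]
    linarith
  · intro h
    have h1 := key
    have h2 : 0 < f (xs n) - πs n * g (xs n) := by
      by_contra hc
      push_neg at hc
      have : (f (xs n) - πs n * g (xs n)) / g xopt ≤ 0 := div_nonpos_of_nonpos_of_nonneg hc hgo.le
      linarith
    rw [hupdate n, lt_div_iff₀ hgn]
    linarith
end

section
/- Let (π_n) and (x_n) be sequences with x_n ∈ argmax_{x∈S} (f(x) − π_n·g(x)) and π_{n+1} = f(x_n)/g(x_n) for every n, and suppose π_0 ≤ π*. Then the sequence (π_n) converges to π* = max_{x∈S} f(x)/g(x). -/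
/-- Convergence of Dinkelbach's algorithm (Theorem 2): if
`x_n ∈ argmax_{x∈S} (f(x) - π_n·g(x))`, `π_{n+1} = f(x_n)/g(x_n)` and
`π_0 ≤ π*`, then `π_n → π* = max_{x∈S} f(x)/g(x)`. -/
theorem dinkelbach_converges
    {K : ℕ} (S : Set (Fin K → ℝ)) (hS : IsCompact S) (hne : S.Nonempty)
    (f g : (Fin K → ℝ) → ℝ)
    (hf : ContinuousOn f S) (hg : ContinuousOn g S)
    (hgpos : ∀ x ∈ S, 0 < g x)
    (πstar : ℝ) (hπstar : IsGreatest ((fun x => f x / g x) '' S) πstar)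
    (πs : ℕ → ℝ) (xs : ℕ → (Fin K → ℝ))
    (hxsmem : ∀ n, xs n ∈ S)
    (hxsmax : ∀ n, IsMaxOn (fun x => f x - πs n * g x) S (xs n))
    (hupdate : ∀ n, πs (n + 1) = f (xs n) / g (xs n))
    (hinit : πs 0 ≤ πstar) :
    Filter.Tendsto πs Filter.atTop (nhds πstar) := by
  obtain ⟨⟨xstar, hxstarS, hxstarval⟩, hub⟩ := hπstar
  simp only at hxstarval
  have hgstar : 0 < g xstar := hgpos xstar hxstarS
  have hfg : πstar * g xstar = f xstar := by
    rw [← hxstarval]; field_simp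
  -- bound on g
  obtain ⟨M, hM⟩ := (hS.image_of_continuousOn hg).bddAbove
  have hMle : ∀ x ∈ S, g x ≤ M := fun x hx => hM ⟨x, hx, rfl⟩
  have hMpos : 0 < M := lt_of_lt_of_le hgstar (hMle xstar hxstarS)
  -- πs n ≤ πstar
  have hle : ∀ n, πs n ≤ πstar := by
    intro n
    cases n with
    | zero => exact hinit
    | succ m => rw [hupdate]; exact hub ⟨xs m, hxsmem m, rfl⟩
  -- key inequality
  have key : ∀ n, (πstar - πs n) * g xstar ≤ f (xs n) - πs n * g (xs n) := by
    intro n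
    have h := hxsmax n hxstarS
    simp only [Set.mem_setOf_eq] at h
    nlinarith [h]
  have hnonneg : ∀ n, 0 ≤ f (xs n) - πs n * g (xs n) := fun n =>
    le_trans (mul_nonneg (sub_nonneg.2 (hle n)) hgstar.le) (key n)
  -- monotone
  have hmono : Monotone πs := by
    apply monotone_nat_of_le_succ
    intro n
    rw [hupdate]
    rw [le_div_iff₀ (hgpos _ (hxsmem n))]
    linarith [hnonneg n]
  have hbdd : BddAbove (Set.range πs) := ⟨πstar, by rintro _ ⟨n, rfl⟩; exact hle n⟩
  have htend : Filter.Tendsto πs Filter.atTop (nhds (⨆ n, πs n)) :=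
    tendsto_atTop_ciSup hmono hbdd
  set L := ⨆ n, πs n with hL
  have hLle : L ≤ πstar := ciSup_le hle
  -- f (xs n) = πs (n+1) * g (xs n)
  have hupd' : ∀ n, f (xs n) = πs (n + 1) * g (xs n) := by
    intro n
    rw [hupdate n, div_mul_cancel₀ _ (hgpos _ (hxsmem n)).ne']
  -- each term bounded below
  have hbound : ∀ n, (πstar - L) * g xstar ≤ (πs (n + 1) - πs n) * M := by
    intro n
    have h1 : (πstar - L) * g xstar ≤ (πstar - πs n) * g xstar := by
      have := le_ciSup hbdd n
      nlinarith
    have h2 : f (xs n) - πs n * g (xs n) = (πs (n + 1) - πs n) * g (xs n) := by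
      rw [hupd' n]; ring
    have h3 : (πs (n + 1) - πs n) * g (xs n) ≤ (πs (n + 1) - πs n) * M := by
      have hd : 0 ≤ πs (n + 1) - πs n := sub_nonneg.2 (hmono (Nat.le_succ n))
      exact mul_le_mul_of_nonneg_left (hMle _ (hxsmem n)) hd
    calc (πstar - L) * g xstar ≤ (πstar - πs n) * g xstar := h1
      _ ≤ f (xs n) - πs n * g (xs n) := key n
      _ = (πs (n + 1) - πs n) * g (xs n) := h2
      _ ≤ (πs (n + 1) - πs n) * M := h3
  -- limit of the RHS is 0
  have htend2 : Filter.Tendsto (fun n => (πs (n + 1) - πs n) * M)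
      Filter.atTop (nhds ((L - L) * M)) := by
    exact ((htend.comp (Filter.tendsto_add_atTop_nat 1)).sub htend).mul_const M
  have hzero : (L - L) * M = 0 := by ring
  rw [hzero] at htend2
  have hc : (πstar - L) * g xstar ≤ 0 := ge_of_tendsto' htend2 hbound
  have : πstar ≤ L := by nlinarith
  have hEq : πstar = L := le_antisymm this hLle
  rw [hEq]
  exact htend
end

section
/- Let S ⊆ ℝ^K be a convex set, f : ℝ^K → ℝ concave on S with f(x) ≥ 0 for all x ∈ S, and g : ℝ^K → ℝ convex on S with g(x) > 0 for all x ∈ S. If x̄ ∈ S is a local maximizer of f/g on S (i.e., there exists ε > 0 such that f(x)/g(x) ≤ f(x̄)/g(x̄) for all x ∈ S with ‖x − x̄‖ < ε), then x̄ is a global maximizer of f/g on S. -/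
/-- Pseudoconcavity consequence for a concave-convex fractional program: a
local maximizer of `f/g` over a convex set `S` (with `f` concave nonnegative
and `g` convex positive on `S`) is a global maximizer. -/
theorem ccfp_local_max_is_global
    {K : ℕ} (S : Set (EuclideanSpace ℝ (Fin K))) (hSconv : Convex ℝ S)
    (f g : EuclideanSpace ℝ (Fin K) → ℝ)
    (hf : ConcaveOn ℝ S f) (hfnn : ∀ x ∈ S, 0 ≤ f x)
    (hg : ConvexOn ℝ S g) (hgpos : ∀ x ∈ S, 0 < g x)
    (xbar : EuclideanSpace ℝ (Fin K)) (hxbar : xbar ∈ S)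
    (hloc : ∃ ε > 0, ∀ x ∈ S, ‖x - xbar‖ < ε → f x / g x ≤ f xbar / g xbar) :
    ∀ x ∈ S, f x / g x ≤ f xbar / g xbar := by
  obtain ⟨ε, hε, hloc⟩ := hloc
  intro y hy
  by_contra hcon
  push_neg at hcon
  -- f y * g xbar > f xbar * g y
  have hgy := hgpos y hy
  have hgx := hgpos xbar hxbar
  have hkey : f xbar * g y < f y * g xbar := by
    have := (div_lt_div_iff₀ hgx hgy).mp hcon
    linarith
  -- choose small t
  have hd : 0 < ‖y - xbar‖ + 1 := by positivity
  set t : ℝ := min (1/2) (ε / (2 * (‖y - xbar‖ + 1))) with ht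
  have ht0 : 0 < t := lt_min (by norm_num) (by positivity)
  have ht1 : t ≤ 1/2 := min_le_left _ _
  have ht1' : t ≤ 1 := ht1.trans (by norm_num)
  have h1t : 0 ≤ 1 - t := by linarith
  set z := (1 - t) • xbar + t • y with hz
  have hzS : z ∈ S := hSconv hxbar hy h1t ht0.le (by ring)
  have hznear : ‖z - xbar‖ < ε := by
    have : z - xbar = t • (y - xbar) := by
      simp [hz]
      module
    rw [this, norm_smul]
    have h2 : t ≤ ε / (2 * (‖y - xbar‖ + 1)) := min_le_right _ _
    have hn : ‖y - xbar‖ < ‖y - xbar‖ + 1 := by linarith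
    calc ‖t‖ * ‖y - xbar‖ = t * ‖y - xbar‖ := by rw [Real.norm_of_nonneg ht0.le]
      _ ≤ (ε / (2 * (‖y - xbar‖ + 1))) * (‖y - xbar‖ + 1) := by
          apply mul_le_mul h2 (by linarith) (norm_nonneg _) (by positivity)
      _ = ε / 2 := by field_simp
      _ < ε := by linarith
  -- values
  have hfz : (1 - t) * f xbar + t * f y ≤ f z := hf.2 hxbar hy h1t ht0.le (by ring)
  have hgz : g z ≤ (1 - t) * g xbar + t * g y := hg.2 hxbar hy h1t ht0.le (by ring)
  have hgz0 : 0 < g z := hgpos z hzS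
  have hB : 0 < (1 - t) * g xbar + t * g y := lt_of_lt_of_le hgz0 hgz
  have hA : 0 ≤ (1 - t) * f xbar + t * f y := by
    have := hfnn xbar hxbar
    have := hfnn y hy
    positivity
  have hstep : f xbar / g xbar < ((1 - t) * f xbar + t * f y) / ((1 - t) * g xbar + t * g y) := by
    rw [div_lt_div_iff₀ hgx hB]
    nlinarith
  have hstep2 : ((1 - t) * f xbar + t * f y) / ((1 - t) * g xbar + t * g y) ≤ f z / g z := by
    calc ((1 - t) * f xbar + t * f y) / ((1 - t) * g xbar + t * g y)
        ≤ ((1 - t) * f xbar + t * f y) / g z := by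
          apply div_le_div_of_nonneg_left hA hgz0 hgz
      _ ≤ f z / g z := by gcongr
  have := hloc z hzS hznear
  linarith
end

section
/- Suppose in addition that u is jointly continuous on S × S, and let (x_n) be a sequence in S with x_{n+1} ∈ argmax_{x∈S} u(x, x_n) for every n. Then every limit point x̄ of the sequence (x_n) satisfies u(x, x̄) ≤ u(x̄, x̄) for all x ∈ S; that is, x̄ maximizes its own surrogate u(·, x̄) over S. -/
/-- Core of Theorem 1 (after Razaviyayn): if the surrogate `u` is jointly
continuous on `S × S`, then every limit point `x̄` of the SLM iterates
maximizes its own surrogate `u(·, x̄)` over `S`. -/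
theorem slm_limit_point_fixed_point
    {K : ℕ} (S : Set (Fin K → ℝ)) (hS : IsCompact S) (hne : S.Nonempty)
    (h : (Fin K → ℝ) → ℝ) (hh : ContinuousOn h S)
    (u : (Fin K → ℝ) → (Fin K → ℝ) → ℝ)
    (hu_eq : ∀ x ∈ S, u x x = h x)
    (hu_le : ∀ x ∈ S, ∀ y ∈ S, u x y ≤ h x)
    (hu_cont : ContinuousOn (fun p : (Fin K → ℝ) × (Fin K → ℝ) => u p.1 p.2)
      (S ×ˢ S))
    (xs : ℕ → (Fin K → ℝ))
    (hmem : ∀ n, xs n ∈ S)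
    (hmax : ∀ n, IsMaxOn (fun x => u x (xs n)) S (xs (n + 1)))
    (xbar : Fin K → ℝ)
    (hlim : ∃ φ : ℕ → ℕ, StrictMono φ ∧
      Filter.Tendsto (fun n => xs (φ n)) Filter.atTop (nhds xbar)) :
    ∀ x ∈ S, u x xbar ≤ u xbar xbar := by
  obtain ⟨φ, hφ, htend⟩ := hlim
  have hxbar : xbar ∈ S :=
    hS.isClosed.mem_of_tendsto htend (Filter.Eventually.of_forall fun n => hmem (φ n))
  -- monotonicity of h ∘ xs
  have hstep : ∀ n, h (xs n) ≤ h (xs (n + 1)) := by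
    intro n
    calc h (xs n) = u (xs n) (xs n) := (hu_eq _ (hmem n)).symm
      _ ≤ u (xs (n + 1)) (xs n) := hmax n (hmem n)
      _ ≤ h (xs (n + 1)) := hu_le _ (hmem (n + 1)) _ (hmem n)
  have hmono : Monotone fun n => h (xs n) := monotone_nat_of_le_succ hstep
  -- h(xs(φ n)) → h xbar
  have htendS : Filter.Tendsto (fun n => xs (φ n)) Filter.atTop (nhdsWithin xbar S) :=
    tendsto_nhdsWithin_of_tendsto_nhds_of_eventually_within _ htend
      (Filter.Eventually.of_forall fun n => hmem (φ n))
  have hhtend : Filter.Tendsto (fun n => h (xs (φ n))) Filter.atTop (nhds (h xbar)) :=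
    (hh xbar hxbar).tendsto.comp htendS
  have hmonoφ : Monotone fun n => h (xs (φ n)) := hmono.comp hφ.monotone
  have hbound : ∀ n, h (xs (φ n)) ≤ h xbar := hmonoφ.ge_of_tendsto hhtend
  intro x hx
  -- for each n : u x (xs (φ n)) ≤ h xbar
  have key : ∀ n, u x (xs (φ n)) ≤ h xbar := by
    intro n
    calc u x (xs (φ n)) ≤ u (xs (φ n + 1)) (xs (φ n)) := hmax (φ n) hx
      _ ≤ h (xs (φ n + 1)) := hu_le _ (hmem _) _ (hmem _)
      _ ≤ h (xs (φ (n + 1))) := hmono (Nat.succ_le_of_lt (hφ (Nat.lt_succ_self n)))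
      _ ≤ h xbar := hbound (n + 1)
  -- pass to the limit
  have hpair : Filter.Tendsto (fun n => (x, xs (φ n))) Filter.atTop
      (nhdsWithin (x, xbar) (S ×ˢ S)) := by
    apply tendsto_nhdsWithin_of_tendsto_nhds_of_eventually_within
    · exact (tendsto_const_nhds.prodMk_nhds htend)
    · exact Filter.Eventually.of_forall fun n => ⟨hx, hmem (φ n)⟩
  have hutend : Filter.Tendsto (fun n => u x (xs (φ n))) Filter.atTop (nhds (u x xbar)) :=
    (hu_cont (x, xbar) ⟨hx, hxbar⟩).tendsto.comp hpair
  have : u x xbar ≤ h xbar :=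
    le_of_tendsto hutend (Filter.Eventually.of_forall key)
  calc u x xbar ≤ h xbar := this
    _ = u xbar xbar := (hu_eq xbar hxbar).symm
end
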